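/- arXiv:1711.02871 — 2 statements merged into one kernel-verified Lean document; each statement's English description precedes it below -/
import Mathlib

section
/- Let r > 1 be a real number. Then the number of connected components of the topological closure of σ_{−r}(ℕ⁺) in ℝ is at least π(r) + 1, where π(r) is the number of primes less than or equal to r. -/
open scoped BigOperators

/-- The divisor function `σ_{-r}(n) = ∑_{d ∣ n} d^{-r}`. -/
noncomputable def sigmaNeg (r : ℝ) (n : ℕ) : ℝ := ∑ d ∈ n.divisors, (d : ℝ) ^ (-r)

/-- The range `σ_{-r}(ℕ⁺) = {σ_{-r}(n) : n ∈ ℕ⁺}`. -/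
def sigmaSet (r : ℝ) : Set ℝ := {x | ∃ n : ℕ, 0 < n ∧ x = sigmaNeg r n}

/-- `π(x)`: the number of primes `p ≤ x`, for a real argument `x`. -/
noncomputable def primePi (x : ℝ) : ℕ := {p : ℕ | p.Prime ∧ (p : ℝ) ≤ x}.ncard

/-!
Fix a prime `q ≤ r`. If every prime factor of `n` exceeds `q`, each divisor `d > 1` of `n` is odd
and `d > q` (so `d ≥ q + 2` when `q` is odd), and `d^{-r} ≤ q^{-r} (q/d)^q`; comparing with
telescoping sums gives `σ_{-r}(n) ≤ 1 + θ_q q^{-r}` for a constant `θ_q < 1` depending only on `q`.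
If instead a prime `p ≤ q` divides `n`, then `σ_{-r}(n) ≥ 1 + p^{-r} ≥ 1 + q^{-r}`. Hence the
interval `(1 + θ_q q^{-r}, 1 + q^{-r})` misses the closure of `σ_{-r}(ℕ⁺)`, and these gaps put
the `π(r) + 1` points `σ_{-r}(1) = 1` and `σ_{-r}(p) = 1 + p^{-r}` (`p ≤ r` prime) in distinct
components.
-/

open Finset

theorem sum_le_of_le_sub {f g : ℕ → ℝ} {a : ℕ} {D : Finset ℕ} (hD : ∀ d ∈ D, a ≤ d)
    (hf : ∀ k, a ≤ k → 0 ≤ f k) (hfg : ∀ k, a ≤ k → f k ≤ g k - g (k + 1))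
    (hg : ∀ k, a ≤ k → 0 ≤ g k) : ∑ d ∈ D, f d ≤ g a := by
  obtain ⟨N, haN, hDN⟩ : ∃ N, a ≤ N ∧ D ⊆ Ico a N :=
    ⟨max a (D.sup id + 1), le_max_left _ _, fun d hd => mem_Ico.2
      ⟨hD d hd, lt_max_of_lt_right (Nat.lt_succ_of_le (le_sup (f := id) hd))⟩⟩
  calc ∑ d ∈ D, f d ≤ ∑ k ∈ Ico a N, f k :=
        sum_le_sum_of_subset_of_nonneg hDN fun k hk _ => hf k (mem_Ico.1 hk).1
    _ ≤ ∑ k ∈ Ico a N, (g k - g (k + 1)) :=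
        sum_le_sum fun k hk => hfg k (mem_Ico.1 hk).1
    _ = g a - g N := by
        rw [← neg_sub, ← sum_Ico_sub g haN, ← sum_neg_distrib]
        simp only [neg_sub]
    _ ≤ g a := sub_le_self _ (hg N haN)

theorem inv_pow_add_mul_inv_pow_succ_le (m : ℕ) {x : ℝ} (hx : 1 < x) :
    (x ^ m)⁻¹ + m * (x ^ (m + 1))⁻¹ ≤ ((x - 1) ^ m)⁻¹ := by
  have hx0 : 0 < x - 1 := by linarith
  have hbern : 1 + m * (x - 1)⁻¹ ≤ (1 + (x - 1)⁻¹) ^ m :=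
    one_add_mul_le_pow (by linarith [inv_pos.2 hx0]) m
  have hx' : 1 + (x - 1)⁻¹ = x / (x - 1) := by field_simp; ring
  calc (x ^ m)⁻¹ + m * (x ^ (m + 1))⁻¹ = (x ^ m)⁻¹ * (1 + m * x⁻¹) := by
        rw [pow_succ, mul_inv]; ring
    _ ≤ (x ^ m)⁻¹ * (1 + m * (x - 1)⁻¹) := by gcongr; linarith
    _ ≤ (x ^ m)⁻¹ * (x / (x - 1)) ^ m := by gcongr; rwa [← hx']
    _ = ((x - 1) ^ m)⁻¹ := by rw [div_pow]; field_simp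

theorem sum_inv_pow_succ_le {m a : ℕ} (hm : 0 < m) (ha : 2 ≤ a) {D : Finset ℕ}
    (hD : ∀ d ∈ D, a ≤ d) : ∑ d ∈ D, ((d : ℝ) ^ (m + 1))⁻¹ ≤ (((a : ℝ) - 1) ^ m)⁻¹ / m := by
  have hm' : (0 : ℝ) < m := by exact_mod_cast hm
  refine sum_le_of_le_sub (g := fun k => (((k : ℝ) - 1) ^ m)⁻¹ / m) hD (fun k _ => by positivity)
    (fun k hk => ?_) (fun k hk => ?_)
  · have hk' : (1 : ℝ) < k := by exact_mod_cast hk.trans_lt' ha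
    have := inv_pow_add_mul_inv_pow_succ_le m hk'
    push_cast
    rw [add_sub_cancel_right, ← sub_div, le_div_iff₀ hm']
    linarith
  · have hk' : (1 : ℝ) ≤ k := by exact_mod_cast (show 1 ≤ k by omega)
    have : (0 : ℝ) ≤ k - 1 := by linarith
    positivity

theorem sum_inv_sq_odd_le {D : Finset ℕ} (hD : ∀ d ∈ D, Odd d ∧ 3 ≤ d) :
    ∑ d ∈ D, ((d : ℝ) ^ 2)⁻¹ ≤ 15 / 64 := by
  have hinj : ∀ x ∈ D, ∀ y ∈ D, x / 2 = y / 2 → x = y := by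
    intro x hx y hy hxy
    obtain ⟨⟨i, rfl⟩, -⟩ := hD x hx
    obtain ⟨⟨j, rfl⟩, -⟩ := hD y hy
    omega
  have hsum : ∑ d ∈ D, ((d : ℝ) ^ 2)⁻¹ =
      ∑ k ∈ D.image (fun d : ℕ => d / 2), ((2 * (k : ℝ) + 1) ^ 2)⁻¹ := by
    rw [sum_image hinj]
    refine sum_congr rfl fun d hd => ?_
    obtain ⟨⟨i, rfl⟩, -⟩ := hD d hd
    congr 2
    push_cast
    rw [show (2 * i + 1) / 2 = i by omega]
  rw [hsum]
  -- For `g k = 1/(4k) - 1/(64k³)` and `u = k (k + 1)`, the telescoping condition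
  -- `1/(2k+1)² ≤ g k - g (k + 1)` reduces to `4u² ≥ 7u + 1`.
  refine (sum_le_of_le_sub (a := 1) (g := fun k => (4 * (k : ℝ))⁻¹ - (64 * (k : ℝ) ^ 3)⁻¹)
    (fun k hk => ?_) (fun k _ => by positivity) (fun k hk => ?_) (fun k hk => ?_)).trans_eq
    (by norm_num)
  · obtain ⟨d, hd, rfl⟩ := mem_image.1 hk
    obtain ⟨⟨i, rfl⟩, h3⟩ := hD d hd
    omega
  · have hk' : (1 : ℝ) ≤ k := by exact_mod_cast hk
    push_cast
    rw [inv_le_iff_one_le_mul₀ (by positivity)]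
    field_simp
    have hu : 2 ≤ (k : ℝ) * (k + 1) := by nlinarith
    nlinarith [mul_nonneg (sub_nonneg.2 hu) (by positivity : (0 : ℝ) ≤ 4 * (k * (k + 1)) + 1)]
  · have hk' : (1 : ℝ) ≤ k := by exact_mod_cast hk
    rw [sub_nonneg]
    apply inv_anti₀ (by positivity)
    nlinarith [one_le_pow₀ (n := 2) hk']

theorem pow_succ_lt_mul_pow {m : ℕ} (hm : 2 ≤ m) :
    ((m : ℝ) + 1) ^ (m + 1) < m * ((m : ℝ) + 2) ^ m := by
  have hm' : (2 : ℝ) ≤ m := by exact_mod_cast hm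
  have hbern : 1 + m * ((m : ℝ) + 1)⁻¹ ≤ (1 + ((m : ℝ) + 1)⁻¹) ^ m :=
    one_add_mul_le_pow (by linarith [inv_pos.2 (by linarith : (0 : ℝ) < m + 1)]) m
  have hsplit : ((m : ℝ) + 2) ^ m = ((m : ℝ) + 1) ^ m * (1 + ((m : ℝ) + 1)⁻¹) ^ m := by
    rw [← mul_pow]; congr 1; field_simp; ring
  have hkey : (m : ℝ) + 1 < m * (1 + m * ((m : ℝ) + 1)⁻¹) := by
    rw [show (m : ℝ) * (1 + m * ((m : ℝ) + 1)⁻¹) = m * (2 * m + 1) / (m + 1) by field_simp; ring,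
      lt_div_iff₀ (by positivity)]
    nlinarith
  calc ((m : ℝ) + 1) ^ (m + 1) = ((m : ℝ) + 1) ^ m * (m + 1) := pow_succ _ _
    _ < ((m : ℝ) + 1) ^ m * (m * (1 + m * ((m : ℝ) + 1)⁻¹)) := by gcongr
    _ ≤ ((m : ℝ) + 1) ^ m * (m * (1 + ((m : ℝ) + 1)⁻¹) ^ m) := by gcongr
    _ = m * ((m : ℝ) + 2) ^ m := by rw [hsplit]; ring

theorem rpow_neg_le_mul_inv_pow {c d r : ℝ} {s : ℕ} (hc : 0 < c) (hcd : c ≤ d) (hsr : s ≤ r) :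
    d ^ (-r) ≤ c ^ (-r) * (c ^ s * (d ^ s)⁻¹) := by
  have hd : 0 < d := hc.trans_le hcd
  calc d ^ (-r) = c ^ (-r) * (d / c) ^ (-r) := by
        rw [← Real.mul_rpow hc.le (by positivity), mul_div_cancel₀ _ hc.ne']
    _ ≤ c ^ (-r) * (d / c) ^ (-(s : ℝ)) := by
        gcongr
        exact (one_le_div hc).2 hcd
    _ = c ^ (-r) * (c ^ s * (d ^ s)⁻¹) := by
        rw [Real.rpow_neg (div_pos hd hc).le, Real.rpow_natCast, div_pow, inv_div, div_eq_mul_inv]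

theorem exists_lt_one_forall_pow_mul_sum_inv_pow_le {q : ℕ} (hq : q.Prime) :
    ∃ θ < 1, ∀ D : Finset ℕ, (∀ d ∈ D, q < d.minFac) →
      (q : ℝ) ^ q * ∑ d ∈ D, ((d : ℝ) ^ q)⁻¹ ≤ θ := by
  have hq2 := hq.two_le
  have hrough : ∀ d, q < d.minFac → Odd d ∧ q < d := by
    intro d hd
    have hd1 : d ≠ 1 := by rintro rfl; simp at hd; omega
    have hd0 : d ≠ 0 := by rintro rfl; simp at hd; omega
    have hodd : ¬ 2 ∣ d := fun h2 => by have := Nat.minFac_le_of_dvd le_rfl h2; omega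
    exact ⟨Nat.odd_iff.2 (by omega), hd.trans_le (Nat.minFac_le (by omega))⟩
  rcases hq.eq_two_or_odd' with rfl | hqodd
  · refine ⟨4 * (15 / 64), by norm_num, fun D hD => ?_⟩
    have := sum_inv_sq_odd_le fun d hd => hrough d (hD d hd)
    push_cast
    linarith
  · obtain ⟨m, rfl⟩ : ∃ m, q = m + 1 := ⟨q - 1, by omega⟩
    have hm : 2 ≤ m := by
      rcases hqodd with ⟨k, hk⟩
      omega
    refine ⟨((m : ℝ) + 1) ^ (m + 1) * ((((m : ℝ) + 2) ^ m)⁻¹ / m), ?_, fun D hD => ?_⟩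
    · have hm' : (0 : ℝ) < m := by positivity
      rw [← mul_div_assoc, div_lt_one hm', mul_inv_lt_iff₀ (by positivity)]
      exact pow_succ_lt_mul_pow hm
    · have hD' : ∀ d ∈ D, m + 3 ≤ d := fun d hd => by
        obtain ⟨⟨k, rfl⟩, hd⟩ := hrough d (hD d hd)
        rcases hqodd with ⟨j, hj⟩
        omega
      have := sum_inv_pow_succ_le (m := m) (by omega) (by omega) hD'
      push_cast at this ⊢
      rw [show (m : ℝ) + 3 - 1 = m + 2 by ring] at this
      gcongr

theorem one_add_rpow_neg_le_sigmaNeg (r : ℝ) {l n : ℕ} (hl : 1 < l) (hn : 0 < n) (hln : l ∣ n) :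
    1 + (l : ℝ) ^ (-r) ≤ sigmaNeg r n := by
  have hsub : ({1, l} : Finset ℕ) ⊆ n.divisors := by
    simp [insert_subset_iff, hln, hn.ne']
  calc 1 + (l : ℝ) ^ (-r) = ∑ d ∈ ({1, l} : Finset ℕ), (d : ℝ) ^ (-r) := by
        rw [sum_pair hl.ne]; simp
    _ ≤ sigmaNeg r n := sum_le_sum_of_subset_of_nonneg hsub fun d _ _ => by positivity

theorem sigmaNeg_le_of_forall_prime_dvd_lt {r θ : ℝ} {q n : ℕ} (hq : 0 < q) (hqr : (q : ℝ) ≤ r)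
    (hθ : ∀ D : Finset ℕ, (∀ d ∈ D, q < d.minFac) → (q : ℝ) ^ q * ∑ d ∈ D, ((d : ℝ) ^ q)⁻¹ ≤ θ)
    (hn : 0 < n) (h : ∀ p, p.Prime → p ∣ n → q < p) : sigmaNeg r n ≤ 1 + θ * (q : ℝ) ^ (-r) := by
  have hD : ∀ d ∈ n.divisors.erase 1, q < d.minFac := by
    intro d hd
    obtain ⟨hd1, hdn⟩ := mem_erase.1 hd
    exact h _ (Nat.minFac_prime hd1) ((Nat.minFac_dvd d).trans (Nat.dvd_of_mem_divisors hdn))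
  have hqd : ∀ d ∈ n.divisors.erase 1, (q : ℝ) ≤ d := fun d hd => by
    have hd0 : 0 < d := Nat.pos_of_mem_divisors (mem_of_mem_erase hd)
    exact_mod_cast (hD d hd).le.trans (Nat.minFac_le hd0)
  have hq' : (0 : ℝ) < q := by exact_mod_cast hq
  calc sigmaNeg r n = 1 + ∑ d ∈ n.divisors.erase 1, (d : ℝ) ^ (-r) := by
        rw [sigmaNeg, ← add_sum_erase _ _ (Nat.one_mem_divisors.2 hn.ne')]; simp
    _ ≤ 1 + ∑ d ∈ n.divisors.erase 1, (q : ℝ) ^ (-r) * ((q : ℝ) ^ q * ((d : ℝ) ^ q)⁻¹) := by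
        gcongr with d hd
        exact rpow_neg_le_mul_inv_pow hq' (hqd d hd) hqr
    _ = 1 + ((q : ℝ) ^ q * ∑ d ∈ n.divisors.erase 1, ((d : ℝ) ^ q)⁻¹) * (q : ℝ) ^ (-r) := by
        rw [← mul_sum, ← mul_sum]; ring
    _ ≤ 1 + θ * (q : ℝ) ^ (-r) := by gcongr; exact hθ _ hD

theorem disjoint_Ioo_closure_sigmaSet {r θ : ℝ} {q : ℕ} (hq : q.Prime) (hqr : (q : ℝ) ≤ r)
    (hθ : ∀ D : Finset ℕ, (∀ d ∈ D, q < d.minFac) → (q : ℝ) ^ q * ∑ d ∈ D, ((d : ℝ) ^ q)⁻¹ ≤ θ) :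
    Disjoint (Set.Ioo (1 + θ * (q : ℝ) ^ (-r)) (1 + (q : ℝ) ^ (-r))) (closure (sigmaSet r)) := by
  refine (Set.subset_compl_iff_disjoint_right.1 (closure_minimal ?_ isOpen_Ioo.isClosed_compl)).symm
  rintro _ ⟨n, hn, rfl⟩ ⟨hlo, hhi⟩
  by_cases h : ∀ p, p.Prime → p ∣ n → q < p
  · linarith [sigmaNeg_le_of_forall_prime_dvd_lt hq.pos hqr hθ hn h]
  · push Not at h
    obtain ⟨p, hp, hpn, hpq⟩ := h
    have hr : 0 ≤ r := le_trans (by positivity) hqr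
    have hpq' : (q : ℝ) ^ (-r) ≤ (p : ℝ) ^ (-r) :=
      Real.rpow_le_rpow_of_nonpos (by exact_mod_cast hp.pos) (by exact_mod_cast hpq) (by linarith)
    linarith [one_add_rpow_neg_le_sigmaNeg r hp.one_lt hn hpn]

theorem ConnectedComponents.mk_ne_mk_of_lt_of_notMem {α : Type*} [LinearOrder α]
    [TopologicalSpace α] [OrderClosedTopology α] {C : Set α} {x y : C} {t : α}
    (hxt : (x : α) < t) (hty : t < y) (ht : t ∉ C) :
    ConnectedComponents.mk x ≠ ConnectedComponents.mk y := by
  intro hxy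
  have hpc : IsPreconnected (((↑) : C → α) '' connectedComponent y) :=
    isPreconnected_connectedComponent.image _ continuous_subtype_val.continuousOn
  rw [ConnectedComponents.coe_eq_coe'] at hxy
  obtain ⟨z, -, rfl⟩ := hpc.Icc_subset ⟨x, hxy, rfl⟩ ⟨y, mem_connectedComponent, rfl⟩
    ⟨hxt.le, hty.le⟩
  exact ht z.2

noncomputable def sigmaComponent (r : ℝ) (n : ℕ) (hn : 0 < n) :
    ConnectedComponents (closure (sigmaSet r)) :=
  ConnectedComponents.mk ⟨sigmaNeg r n, subset_closure ⟨n, hn, rfl⟩⟩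

theorem sigmaComponent_ne {r : ℝ} {q n : ℕ} (hq : q.Prime) (hqr : (q : ℝ) ≤ r) (hn : 0 < n)
    (h : ∀ p, p.Prime → p ∣ n → q < p) : sigmaComponent r n hn ≠ sigmaComponent r q hq.pos := by
  obtain ⟨θ, hθ1, hθ⟩ := exists_lt_one_forall_pow_mul_sum_inv_pow_le hq
  have hqr' : 0 < (q : ℝ) ^ (-r) := Real.rpow_pos_of_pos (by exact_mod_cast hq.pos) _
  obtain ⟨t, hlo, hhi⟩ := exists_between (by nlinarith :
    1 + θ * (q : ℝ) ^ (-r) < 1 + (q : ℝ) ^ (-r))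
  exact ConnectedComponents.mk_ne_mk_of_lt_of_notMem
    (hlo.trans_le' (sigmaNeg_le_of_forall_prime_dvd_lt hq.pos hqr hθ hn h))
    (hhi.trans_le (one_add_rpow_neg_le_sigmaNeg r hq.one_lt hq.pos dvd_rfl))
    fun ht => (disjoint_Ioo_closure_sigmaSet hq hqr hθ).ne_of_mem ⟨hlo, hhi⟩ ht rfl

theorem sigmaComponent_ne_of_lt {r : ℝ} {n m : ℕ} (hn : 0 < n)
    (hn' : n = 1 ∨ n.Prime ∧ (n : ℝ) ≤ r) (hm : m.Prime) (hmr : (m : ℝ) ≤ r) (hnm : n < m) :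
    sigmaComponent r n hn ≠ sigmaComponent r m hm.pos := by
  rcases hn' with rfl | ⟨hnp, hnr⟩
  · exact sigmaComponent_ne hm hmr one_pos fun p hp hp1 => (hp.not_dvd_one hp1).elim
  · exact (sigmaComponent_ne hnp hnr hm.pos fun p hp hpm =>
      (Nat.prime_dvd_prime_iff_eq hp hm).1 hpm ▸ hnm).symm

theorem stmt_2_general (r : ℝ) :
    ((primePi r + 1 : ℕ) : Cardinal) ≤
      Cardinal.mk (ConnectedComponents ↥(closure (sigmaSet r))) := by
  set P := {p : ℕ | p.Prime ∧ (p : ℝ) ≤ r}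
  have hP : P.Finite := (Set.finite_Iic ⌊r⌋₊).subset fun p hp => Nat.le_floor hp.2
  set S := insert 1 P
  have hS : S.ncard = primePi r + 1 :=
    Set.ncard_insert_of_notMem (fun h => Nat.not_prime_one h.1) hP
  have hpos : ∀ n ∈ S, 0 < n := by
    rintro n (rfl | hn)
    exacts [one_pos, hn.1.pos]
  have hinj : Function.Injective fun n : S => sigmaComponent r n (hpos n n.2) := by
    refine Function.Injective.of_lt_imp_ne fun n m hnm => ?_
    have hnm : (n : ℕ) < m := hnm
    obtain ⟨hmp, hmr⟩ : (m : ℕ) ∈ P := m.2.resolve_left (by have := hpos n n.2; omega)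
    exact sigmaComponent_ne_of_lt (hpos n n.2) n.2 hmp hmr hnm
  calc ((primePi r + 1 : ℕ) : Cardinal) = Cardinal.mk S := by
        have : Finite S := (hP.insert 1).to_subtype
        rw [← hS, ← Nat.card_coe_set_eq, Nat.cast_card]
    _ ≤ _ := Cardinal.mk_le_of_injective hinj

/-- The number of connected components of the closure of `σ_{-r}(ℕ⁺)` is at least `π(r) + 1`,
where `π(r)` is the number of primes `≤ r`. -/
theorem stmt_2 (r : ℝ) (hr : 1 < r) :
    ((primePi r + 1 : ℕ) : Cardinal) ≤
      Cardinal.mk (ConnectedComponents ↥(closure (sigmaSet r))) :=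
  stmt_2_general r
end

section
/- Every prime p ≥ 29 is not 3-mighty; that is, for every prime p ≥ 29, 1 + p^{−3} ≤ ∏_{q prime, q > p} 1/(1 − q^{−3}). -/
/-!
Since `(1 - x)⁻¹ ≥ exp x ≥ 1 + x`, any finite part of the tail Euler product is at least
`1 + ∑ q⁻³` over the primes `q > p` it contains, so it suffices to find finitely many primes
`q > p` with `∑ q⁻³ ≥ p⁻³`. For `p ≥ 1152`, the central binomial argument behind Bertrand's
postulate, run with a factor `(2p)⁷` that absorbs up to seven primes in `(p, 2p]`, shows that
there are at least eight of them, each contributing at least `(2p)⁻³ = p⁻³ / 8`. For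
`29 ≤ p < 1152`, an explicit ladder of prime triples `a < q₁ < q₂` with `a⁻³ ≤ q₁⁻³ + q₂⁻³`
covers every `p ∈ [a, q₁)` by the two primes `q₁, q₂`.
-/

open Real Finset

namespace Real

variable {ι : Type*}

theorem exp_le_inv_one_sub {x : ℝ} (hx : x < 1) : exp x ≤ (1 - x)⁻¹ := by
  rw [le_inv_comm₀ (exp_pos x) (sub_pos.2 hx), ← exp_neg]
  linarith [add_one_le_exp (-x)]

theorem multipliable_inv_one_sub {f : ι → ℝ} (hf : Summable f) (hf0 : ∀ i, 0 ≤ f i)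
    (hf1 : ∀ i, f i ≤ 1 / 2) : Multipliable fun i ↦ (1 - f i)⁻¹ := by
  have hpos : ∀ i, 0 < 1 - f i := fun i ↦ by linarith [hf1 i]
  have h_eq : ∀ i, (1 - f i)⁻¹ = 1 + f i / (1 - f i) := fun i ↦ by
    field_simp [(hpos i).ne']
    ring
  simp_rw [h_eq]
  refine Real.multipliable_one_add_of_summable <|
    (hf.mul_left 2).of_nonneg_of_le (fun i ↦ div_nonneg (hf0 i) (hpos i).le) fun i ↦ ?_
  rw [div_le_iff₀ (hpos i)]
  nlinarith [hf0 i, hf1 i]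

theorem prod_le_tprod {f : ι → ℝ} (hf : Multipliable f) (s : Finset ι) (hs0 : ∀ i ∈ s, 0 ≤ f i)
    (hs : ∀ i ∉ s, 1 ≤ f i) : ∏ i ∈ s, f i ≤ ∏' i, f i :=
  ge_of_tendsto hf.hasProd <| Filter.eventually_atTop.2
    ⟨s, fun _t hst ↦ prod_le_prod_of_subset_of_one_le hst hs0 fun i _ his ↦ hs i his⟩

end Real

namespace Bertrand

theorem concaveOn_log_main_inequality_pow_add_seven :
    ConcaveOn ℝ (Set.Ioi 0.5) fun y : ℝ ↦
      8 * log y + √(2 * y) * log (2 * y) + 7 * log 2 - log 4 / 3 * y := by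
  refine ((ConcaveOn.add (ConcaveOn.add ?_ ?_) (concaveOn_const _ (convex_Ioi _))).sub ?_)
  · exact (strictConcaveOn_log_Ioi.concaveOn.subset (Set.Ioi_subset_Ioi (by norm_num))
      (convex_Ioi 0.5)).smul (by norm_num : (0 : ℝ) ≤ 8)
  · convert! (strictConcaveOn_sqrt_mul_log_Ioi.concaveOn.comp_linearMap
      ((2 : ℝ) • LinearMap.id)) using 1
    ext y
    simp only [Set.mem_Ioi, Set.mem_preimage, LinearMap.smul_apply, LinearMap.id_coe, id_eq,
      smul_eq_mul]
    rw [← mul_lt_mul_iff_right₀ two_pos]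
    norm_num1
    rfl
  · exact (convexOn_id (convex_Ioi (0.5 : ℝ))).smul
      (div_nonneg (log_nonneg (by norm_num1)) (by norm_num1))

theorem real_main_inequality_pow_add_seven {x : ℝ} (hx : 1152 ≤ x) :
    x * (2 * x) ^ (√(2 * x) + 7) * 4 ^ (2 * x / 3) ≤ 4 ^ x := by
  set f : ℝ → ℝ := fun y ↦ 8 * log y + √(2 * y) * log (2 * y) + 7 * log 2 - log 4 / 3 * y
  have hx0 : 0 < x := by linarith
  have hlog4 : log 4 = 2 * log 2 := by
    rw [show (4 : ℝ) = 2 ^ 2 by norm_num, log_pow]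
    push_cast
    ring
  have hlog2 : 0 < log 2 := log_pos one_lt_two
  suffices hfx : f x ≤ 0 by
    rw [← log_le_log_iff (by positivity) (by positivity), log_mul (by positivity) (by positivity),
      log_mul hx0.ne' (by positivity), log_rpow (by positivity), log_rpow (by norm_num),
      log_rpow (by norm_num), log_mul two_ne_zero hx0.ne', hlog4]
    simp only [f, log_mul two_ne_zero hx0.ne', hlog4] at hfx
    linarith
  -- `f` is concave, nonnegative at 18 and nonpositive at 1152, hence nonpositive beyond 1152.
  have hf18 : 0 ≤ f 18 := by
    have hsqrt : √(2 * 18 : ℝ) = 6 := (sqrt_eq_iff_mul_self_eq_of_pos (by norm_num)).2 (by norm_num)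
    norm_num only [f, hsqrt, hlog4]
    have h36 : 0 ≤ log (36 : ℝ) := log_nonneg (by norm_num)
    have h18 : log 2 ≤ log 18 := log_le_log (by norm_num) (by norm_num)
    linarith
  have hf1152 : f 1152 ≤ 0 := by
    have hsqrt : √(2 * 1152 : ℝ) = 48 :=
      (sqrt_eq_iff_mul_self_eq_of_pos (by norm_num)).2 (by norm_num)
    have hlog_le (m : ℝ) (k : ℕ) (hm : 0 < m) (hmk : m ≤ 2 ^ k) : log m ≤ k * log 2 := by
      rw [← log_pow]
      exact log_le_log hm hmk
    norm_num only [f, hsqrt, hlog4]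
    have h1152 := hlog_le 1152 11 (by norm_num) (by norm_num)
    have h2304 := hlog_le 2304 12 (by norm_num) (by norm_num)
    push_cast at h1152 h2304
    linarith
  exact (concaveOn_log_main_inequality_pow_add_seven.right_le_of_le_left'' (by norm_num)
    (by norm_num; linarith) (by norm_num) hx (hf1152.trans hf18)).trans hf1152

theorem main_inequality_pow_add_seven {n : ℕ} (hn : 1152 ≤ n) :
    n * (2 * n) ^ (Nat.sqrt (2 * n) + 7) * 4 ^ (2 * n / 3) ≤ 4 ^ n := by
  rw [← @Nat.cast_le ℝ]
  simp only [Nat.cast_mul, Nat.cast_pow, Nat.cast_ofNat, ← rpow_natCast]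
  refine le_trans ?_ (real_main_inequality_pow_add_seven (by exact_mod_cast hn))
  gcongr
  · exact_mod_cast (show 1 ≤ 2 * n by omega)
  · push_cast
    gcongr
    exact_mod_cast Real.nat_sqrt_le_real_sqrt (a := 2 * n)
  · norm_num
  · exact Nat.cast_div_le.trans (by norm_cast)

end Bertrand

namespace Nat

theorem prod_pow_factorization_centralBinom_range_le {n : ℕ} (hn : 0 < n) :
    ∏ p ∈ range (2 * n / 3 + 1), p ^ (centralBinom n).factorization p ≤
      (2 * n) ^ sqrt (2 * n) * 4 ^ (2 * n / 3) := by
  set f : ℕ → ℕ := fun p ↦ p ^ (centralBinom n).factorization p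
  set S := {p ∈ range (2 * n / 3 + 1) | p.Prime}
  have hS : ∏ p ∈ S, f p = ∏ p ∈ range (2 * n / 3 + 1), f p :=
    prod_filter_of_ne fun p _ hp ↦ by
      contrapose! hp
      simp only [f, factorization_eq_zero_of_not_prime _ hp, pow_zero]
  rw [← hS, ← prod_filter_mul_prod_filter_not S (· ≤ sqrt (2 * n))]
  gcongr
  · refine (prod_le_prod' fun p _ ↦ (pow_factorization_choose_le (by omega) : f p ≤ 2 * n)).trans ?_
    rw [prod_const]
    refine pow_right_mono₀ (by omega) ((card_le_card fun x hx ↦ ?_).trans (card_Icc 1 _).le)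
    obtain ⟨h1, h2⟩ := mem_filter.1 hx
    exact mem_Icc.2 ⟨(mem_filter.1 h1).2.one_lt.le, h2⟩
  · refine le_trans ?_ (primorial_le_four_pow (2 * n / 3))
    refine (prod_le_prod' fun p hp ↦ (?_ : f p ≤ p)).trans ?_
    · obtain ⟨h1, h2⟩ := mem_filter.1 hp
      refine (pow_right_mono₀ (mem_filter.1 h1).2.one_lt.le ?_).trans (pow_one p).le
      exact factorization_choose_le_one (sqrt_lt'.1 <| not_le.1 h2)
    exact prod_le_prod_of_subset_of_one_le' (filter_subset _ _)
      fun p hp _ ↦ (mem_filter.1 hp).2.one_lt.le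

theorem centralBinom_eq_prod_range_mul_prod_primes_Ioc {n : ℕ} (hn : 2 < n) :
    centralBinom n = (∏ p ∈ range (2 * n / 3 + 1), p ^ (centralBinom n).factorization p) *
      ∏ p ∈ {p ∈ Ioc n (2 * n) | p.Prime}, p ^ (centralBinom n).factorization p := by
  have hlarge : ∏ p ∈ Ico (2 * n / 3 + 1) (2 * n + 1), p ^ (centralBinom n).factorization p =
      ∏ p ∈ {p ∈ Ioc n (2 * n) | p.Prime}, p ^ (centralBinom n).factorization p := by
    refine (prod_subset (fun q hq ↦ ?_) fun q hq hqS ↦ ?_).symm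
    · simp only [mem_filter, mem_Ioc] at hq
      simp only [mem_Ico]
      omega
    · simp only [mem_Ico] at hq
      simp only [mem_filter, mem_Ioc, not_and] at hqS
      by_cases hq_prime : q.Prime
      · rw [factorization_centralBinom_of_two_mul_self_lt_three_mul hn
          (by by_contra! h; exact hqS ⟨h, by omega⟩ hq_prime) (by omega), pow_zero]
      · rw [factorization_eq_zero_of_not_prime _ hq_prime, pow_zero]
  conv_lhs => rw [← prod_pow_factorization_centralBinom n]
  rw [← hlarge, range_eq_Ico, range_eq_Ico, prod_Ico_consecutive _ (by omega) (by omega)]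

theorem centralBinom_le_of_card_primes_Ioc_le {n k : ℕ} (hn : 2 < n)
    (hk : #{p ∈ Ioc n (2 * n) | p.Prime} ≤ k) :
    centralBinom n ≤ (2 * n) ^ (sqrt (2 * n) + k) * 4 ^ (2 * n / 3) := by
  have hprimes : ∏ p ∈ {p ∈ Ioc n (2 * n) | p.Prime}, p ^ (centralBinom n).factorization p ≤
      (2 * n) ^ k :=
    calc _ ≤ ∏ _p ∈ {p ∈ Ioc n (2 * n) | p.Prime}, 2 * n :=
          prod_le_prod' fun _ _ ↦ pow_factorization_choose_le (by omega)
      _ ≤ (2 * n) ^ k := by rw [prod_const]; exact pow_le_pow_right₀ (by omega) hk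
  rw [centralBinom_eq_prod_range_mul_prod_primes_Ioc hn, pow_add, mul_right_comm]
  exact Nat.mul_le_mul (prod_pow_factorization_centralBinom_range_le (by omega)) hprimes

theorem eight_le_card_primes_Ioc {n : ℕ} (hn : 1152 ≤ n) : 8 ≤ #{p ∈ Ioc n (2 * n) | p.Prime} := by
  by_contra! hlt
  have hbound := centralBinom_le_of_card_primes_Ioc_le (by omega) (Nat.le_of_lt_succ hlt)
  refine lt_irrefl (4 ^ n) ?_
  calc 4 ^ n < n * centralBinom n := four_pow_lt_mul_centralBinom n (by omega)
    _ ≤ n * ((2 * n) ^ (sqrt (2 * n) + 7) * 4 ^ (2 * n / 3)) := Nat.mul_le_mul_left n hbound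
    _ = n * (2 * n) ^ (sqrt (2 * n) + 7) * 4 ^ (2 * n / 3) := (Nat.mul_assoc ..).symm
    _ ≤ 4 ^ n := Bertrand.main_inequality_pow_add_seven hn

end Nat

def IsMighty (r : ℝ) (p : ℕ) : Prop :=
  ∏' q : {q : ℕ // q.Prime ∧ p < q}, (1 - ((q : ℕ) : ℝ) ^ (-r))⁻¹ < 1 + (p : ℝ) ^ (-r)

section EulerFactors

variable {r : ℝ} {p : ℕ}

theorem rpow_neg_le_half_of_prime (hr : 1 < r) {q : ℕ} (hq : q.Prime) : (q : ℝ) ^ (-r) ≤ 1 / 2 := by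
  have hq2 : (2 : ℝ) ≤ q := mod_cast hq.two_le
  calc (q : ℝ) ^ (-r) ≤ (q : ℝ) ^ (-1 : ℝ) :=
        rpow_le_rpow_of_exponent_le (by linarith) (by linarith)
    _ ≤ 1 / 2 := by
        rw [rpow_neg_one, one_div]
        exact inv_anti₀ two_pos hq2

theorem multipliable_tail_eulerProduct (hr : 1 < r) (p : ℕ) :
    Multipliable fun q : {q : ℕ // q.Prime ∧ p < q} ↦ (1 - ((q : ℕ) : ℝ) ^ (-r))⁻¹ :=
  Real.multipliable_inv_one_sub ((summable_nat_rpow.2 (by linarith)).subtype _)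
    (fun _ ↦ by positivity) fun q ↦ rpow_neg_le_half_of_prime hr q.2.1

theorem not_isMighty_of_rpow_neg_le_sum (hr : 1 < r) (S : Finset ℕ)
    (hS : ∀ q ∈ S, q.Prime ∧ p < q) (hsum : (p : ℝ) ^ (-r) ≤ ∑ q ∈ S, (q : ℝ) ^ (-r)) :
    ¬ IsMighty r p := by
  rw [IsMighty, not_lt]
  have hx1 : ∀ q : ℕ, q.Prime → (q : ℝ) ^ (-r) < 1 := fun q hq ↦
    (rpow_neg_le_half_of_prime hr hq).trans_lt (by norm_num)
  have hfactor : ∀ q : ℕ, q.Prime → 1 ≤ (1 - (q : ℝ) ^ (-r))⁻¹ := fun q hq ↦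
    (one_le_inv₀ (sub_pos.2 (hx1 q hq))).2 (by linarith [rpow_nonneg (Nat.cast_nonneg q) (-r)])
  calc 1 + (p : ℝ) ^ (-r) ≤ 1 + ∑ q ∈ S, (q : ℝ) ^ (-r) := by linarith
    _ ≤ exp (∑ q ∈ S, (q : ℝ) ^ (-r)) := by linarith [add_one_le_exp (∑ q ∈ S, (q : ℝ) ^ (-r))]
    _ = ∏ q ∈ S, exp ((q : ℝ) ^ (-r)) := exp_sum _ _
    _ ≤ ∏ q ∈ S, (1 - (q : ℝ) ^ (-r))⁻¹ :=
        prod_le_prod (fun _ _ ↦ (exp_pos _).le) fun q hq ↦ exp_le_inv_one_sub (hx1 q (hS q hq).1)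
    _ = ∏ q ∈ S.subtype (fun q ↦ q.Prime ∧ p < q), (1 - ((q : ℕ) : ℝ) ^ (-r))⁻¹ := by
        rw [prod_subtype_eq_prod_filter fun q : ℕ ↦ (1 - (q : ℝ) ^ (-r))⁻¹, filter_true_of_mem hS]
    _ ≤ ∏' q : {q : ℕ // q.Prime ∧ p < q}, (1 - ((q : ℕ) : ℝ) ^ (-r))⁻¹ :=
        Real.prod_le_tprod (multipliable_tail_eulerProduct hr p) _
          (fun q _ ↦ zero_le_one.trans (hfactor q q.2.1)) fun q _ ↦ hfactor q q.2.1

end EulerFactors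

theorem not_isMighty_three_of_1152_le {p : ℕ} (hp : 1152 ≤ p) : ¬ IsMighty 3 p := by
  have hprimes : ∀ q ∈ {q ∈ Ioc p (2 * p) | q.Prime}, q.Prime ∧ p < q ∧ q ≤ 2 * p := by
    intro q hq
    simp only [mem_filter, mem_Ioc] at hq
    exact ⟨hq.2, hq.1⟩
  refine not_isMighty_of_rpow_neg_le_sum (by norm_num) _
    (fun q hq ↦ ⟨(hprimes q hq).1, (hprimes q hq).2.1⟩) ?_
  have hterm : ∀ q ∈ {q ∈ Ioc p (2 * p) | q.Prime},
      ((2 * p : ℕ) : ℝ) ^ (-3 : ℝ) ≤ (q : ℝ) ^ (-3 : ℝ) := fun q hq ↦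
    rpow_le_rpow_of_nonpos (mod_cast (hprimes q hq).1.pos) (mod_cast (hprimes q hq).2.2)
      (by norm_num)
  calc (p : ℝ) ^ (-3 : ℝ) = 8 * ((2 * p : ℕ) : ℝ) ^ (-3 : ℝ) := by
        rw [Nat.cast_mul, Nat.cast_ofNat, mul_rpow (by norm_num) (by positivity), ← mul_assoc]
        norm_num
    _ ≤ #{q ∈ Ioc p (2 * p) | q.Prime} • ((2 * p : ℕ) : ℝ) ^ (-3 : ℝ) := by
        rw [nsmul_eq_mul]
        gcongr
        exact_mod_cast Nat.eight_le_card_primes_Ioc hp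
    _ ≤ ∑ q ∈ {q ∈ Ioc p (2 * p) | q.Prime}, (q : ℝ) ^ (-3 : ℝ) := card_nsmul_le_sum _ _ _ hterm

theorem rpow_neg_three_le_add_of_pow_mul_le {a q₁ q₂ : ℕ} (ha : 0 < a) (hq₁ : 0 < q₁) (hq₂ : 0 < q₂)
    (h : q₁ ^ 3 * q₂ ^ 3 ≤ a ^ 3 * (q₁ ^ 3 + q₂ ^ 3)) :
    (a : ℝ) ^ (-3 : ℝ) ≤ (q₁ : ℝ) ^ (-3 : ℝ) + (q₂ : ℝ) ^ (-3 : ℝ) := by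
  simp only [rpow_neg (Nat.cast_nonneg _), rpow_ofNat]
  rw [inv_add_inv (by positivity) (by positivity), ← one_div,
    div_le_div_iff₀ (by positivity) (by positivity), one_mul, mul_comm _ ((a : ℝ) ^ 3)]
  exact_mod_cast h

theorem not_isMighty_three_of_prime_triple (a q₁ q₂ : ℕ)
    (h : q₁.Prime ∧ q₂.Prime ∧ q₁ < q₂ ∧ a < q₁ ∧ q₁ ^ 3 * q₂ ^ 3 ≤ a ^ 3 * (q₁ ^ 3 + q₂ ^ 3))
    (hq₁ : ∀ p, q₁ ≤ p → ¬ IsMighty 3 p) (p : ℕ) (hap : a ≤ p) : ¬ IsMighty 3 p := by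
  obtain ⟨hq₁_prime, hq₂_prime, hq₁₂, haq₁, hcubes⟩ := h
  rcases le_or_gt q₁ p with hq₁p | hpq₁
  · exact hq₁ p hq₁p
  have ha : 0 < a := Nat.pos_of_ne_zero fun ha0 ↦ by
    simp [ha0, hq₁_prime.ne_zero, hq₂_prime.ne_zero] at hcubes
  refine not_isMighty_of_rpow_neg_le_sum (by norm_num) {q₁, q₂} ?_ ?_
  · simp only [mem_insert, mem_singleton]
    rintro q (rfl | rfl)
    exacts [⟨hq₁_prime, hpq₁⟩, ⟨hq₂_prime, hpq₁.trans hq₁₂⟩]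
  · rw [sum_pair hq₁₂.ne]
    exact (rpow_le_rpow_of_nonpos (mod_cast ha) (mod_cast hap) (by norm_num)).trans
      (rpow_neg_three_le_add_of_pow_mul_le ha hq₁_prime.pos hq₂_prime.pos hcubes)

theorem not_isMighty_three_of_29_le : ∀ p, 29 ≤ p → ¬ IsMighty 3 p :=
  not_isMighty_three_of_prime_triple 29 31 37 (by norm_num) <|
  not_isMighty_three_of_prime_triple 31 37 41 (by norm_num) <|
  not_isMighty_three_of_prime_triple 37 43 47 (by norm_num) <|
  not_isMighty_three_of_prime_triple 43 47 53 (by norm_num) <|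
  not_isMighty_three_of_prime_triple 47 53 59 (by norm_num) <|
  not_isMighty_three_of_prime_triple 53 61 67 (by norm_num) <|
  not_isMighty_three_of_prime_triple 61 73 79 (by norm_num) <|
  not_isMighty_three_of_prime_triple 73 83 89 (by norm_num) <|
  not_isMighty_three_of_prime_triple 83 101 103 (by norm_num) <|
  not_isMighty_three_of_prime_triple 101 113 127 (by norm_num) <|
  not_isMighty_three_of_prime_triple 113 137 139 (by norm_num) <|
  not_isMighty_three_of_prime_triple 137 167 173 (by norm_num) <|
  not_isMighty_three_of_prime_triple 167 199 211 (by norm_num) <|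
  not_isMighty_three_of_prime_triple 199 241 251 (by norm_num) <|
  not_isMighty_three_of_prime_triple 241 293 307 (by norm_num) <|
  not_isMighty_three_of_prime_triple 293 359 367 (by norm_num) <|
  not_isMighty_three_of_prime_triple 359 443 449 (by norm_num) <|
  not_isMighty_three_of_prime_triple 443 547 557 (by norm_num) <|
  not_isMighty_three_of_prime_triple 547 683 691 (by norm_num) <|
  not_isMighty_three_of_prime_triple 683 857 859 (by norm_num) <|
  not_isMighty_three_of_prime_triple 857 1069 1087 (by norm_num) <|
  not_isMighty_three_of_prime_triple 1069 1327 1361 (by norm_num) <|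
  fun _ hp ↦ not_isMighty_three_of_1152_le (by omega)

theorem stmt_16_general (p : ℕ) (hp29 : 29 ≤ p) :
    1 + (p : ℝ) ^ (-(3 : ℝ)) ≤
      ∏' q : {q : ℕ // q.Prime ∧ p < q}, (1 - ((q : ℕ) : ℝ) ^ (-(3 : ℝ)))⁻¹ :=
  not_lt.1 (not_isMighty_three_of_29_le p hp29)

/-- Every prime `p ≥ 29` is not `3`-mighty:
`1 + p^{-3} ≤ ∏_{q prime, q > p} 1/(1 - q^{-3})`. -/
theorem stmt_16 (p : ℕ) (hp : p.Prime) (hp29 : 29 ≤ p) :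
    1 + (p : ℝ) ^ (-(3 : ℝ)) ≤
      ∏' q : {q : ℕ // q.Prime ∧ p < q}, (1 - ((q : ℕ) : ℝ) ^ (-(3 : ℝ)))⁻¹ :=
  stmt_16_general p hp29
end
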